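/- Quadrature truncation error for the bounded nonlocal part: assume (A3), (A4), (A6). Then there is a constant K' > 0, independent of h, δ, α, φ, such that for every φ ∈ C²_b(ℝ^N), δ ∈ (0,1), h > 0, and x ∈ ℝ^N: | I^{α,δ}[φ](x) − I^{α,δ}_h[φ](x) | ≤ K' (h²/δ^σ) ‖D²φ‖_0. -/

import Mathlib

open MeasureTheory Set
open scoped RealInnerProductSpace ENNReal NNReal BigOperators

noncomputable section

/-- Euclidean space ℝ^N. -/
abbrev Euc (N : ℕ) := EuclideanSpace ℝ (Fin N)

/-- `‖g‖₀ ≤ M`. -/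
def SupBd {N : ℕ} (g : Euc N → ℝ) (M : ℝ) : Prop := ∀ x, |g x| ≤ M

/-- `g` is Lipschitz with constant `L`. -/
def LipBd {N : ℕ} (g : Euc N → ℝ) (L : ℝ) : Prop := ∀ x y, |g x - g y| ≤ L * ‖x - y‖

/-- sup bound for a vector-valued function. -/
def VSupBd {N : ℕ} (g : Euc N → Euc N) (M : ℝ) : Prop := ∀ x, ‖g x‖ ≤ M

/-- `‖g‖₀ + Lip(g) ≤ M`. -/
def C01Bd {N : ℕ} (g : Euc N → ℝ) (M : ℝ) : Prop :=
  ∃ M0 L, 0 ≤ M0 ∧ 0 ≤ L ∧ M0 + L ≤ M ∧ SupBd g M0 ∧ LipBd g L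

/-- `‖g‖_{1,β} = ‖g‖₀ + ‖Dg‖₀ + [Dg]_{C^{0,β}} ≤ M`. -/
def C1BetaBd {N : ℕ} (g : Euc N → ℝ) (β M : ℝ) : Prop :=
  ∃ M0 M1 M2, 0 ≤ M0 ∧ 0 ≤ M1 ∧ 0 ≤ M2 ∧ M0 + M1 + M2 ≤ M ∧
    Differentiable ℝ g ∧ SupBd g M0 ∧ (∀ x, ‖gradient g x‖ ≤ M1) ∧
    ∀ x y, ‖gradient g x - gradient g y‖ ≤ M2 * ‖x - y‖ ^ β

/-- bounded `C²` function. -/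
def C2b {N : ℕ} (φ : Euc N → ℝ) : Prop :=
  ContDiff ℝ 2 φ ∧ ∃ M, ∀ i : ℕ, i ≤ 2 → ∀ x, ‖iteratedFDeriv ℝ i φ x‖ ≤ M

/-- bounded `C³` function. -/
def C3b {N : ℕ} (φ : Euc N → ℝ) : Prop :=
  ContDiff ℝ 3 φ ∧ ∃ M, ∀ i : ℕ, i ≤ 3 → ∀ x, ‖iteratedFDeriv ℝ i φ x‖ ≤ M

/-- bounded `C⁴` function. -/
def C4b {N : ℕ} (φ : Euc N → ℝ) : Prop :=
  ContDiff ℝ 4 φ ∧ ∃ M, ∀ i : ℕ, i ≤ 4 → ∀ x, ‖iteratedFDeriv ℝ i φ x‖ ≤ M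

/-- The full nonlocal operator
`I[φ](x) = ∫_{z≠0} (φ(x+η(z)) − φ(x) − 1_{|z|<1} η(z)·∇φ(x)) ν(dz)`. -/
def Iop {N : ℕ} (η : Euc N → Euc N) (ν : Measure (Euc N)) (φ : Euc N → ℝ) (x : Euc N) : ℝ :=
  ∫ z in {z : Euc N | z ≠ 0},
    (φ (x + η z) - φ x -
      Set.indicator {w : Euc N | ‖w‖ < 1} (fun w => ⟪η w, gradient φ x⟫) z) ∂ν

/-- The singular part `I_κ[φ](x)` over `0<|z|<κ`. -/
def IopSing {N : ℕ} (η : Euc N → Euc N) (ν : Measure (Euc N)) (κ : ℝ) (φ : Euc N → ℝ)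
    (x : Euc N) : ℝ :=
  ∫ z in {z : Euc N | 0 < ‖z‖ ∧ ‖z‖ < κ}, (φ (x + η z) - φ x - ⟪η z, gradient φ x⟫) ∂ν

/-- The tail part `I^κ[u,p](x)` over `|z| ≥ κ`. -/
def IopTail {N : ℕ} (η : Euc N → Euc N) (ν : Measure (Euc N)) (κ : ℝ) (u : Euc N → ℝ)
    (p : Euc N) (x : Euc N) : ℝ :=
  ∫ z in {z : Euc N | κ ≤ ‖z‖},
    (u (x + η z) - u x - Set.indicator {w : Euc N | ‖w‖ < 1} (fun w => ⟪η w, p⟫) z) ∂ν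

/-- The truncated (bounded) operator `I^r[φ](x) = ∫_{|z|>r} (φ(x+η(z)) − φ(x)) ν(dz)`. -/
def Itrunc {N : ℕ} (η : Euc N → Euc N) (ν : Measure (Euc N)) (r : ℝ) (φ : Euc N → ℝ)
    (x : Euc N) : ℝ :=
  ∫ z in {z : Euc N | r < ‖z‖}, (φ (x + η z) - φ x) ∂ν

/-- The truncated fractional Laplacian `Δ^{σ,r}[φ](x) = ∫_{|z|>r}(φ(x+z)−φ(x)) |z|^{-N-σ} dz`. -/
def truncFracLap {N : ℕ} (σ r : ℝ) (φ : Euc N → ℝ) (x : Euc N) : ℝ :=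
  ∫ z in {z : Euc N | r < ‖z‖}, (φ (x + z) - φ x) / ‖z‖ ^ ((N : ℝ) + σ)

/-- The fractional Laplacian (up to the normalizing constant) on test functions. -/
def fracLapTest {N : ℕ} (σ : ℝ) (φ : Euc N → ℝ) (x : Euc N) : ℝ :=
  - ∫ z : Euc N,
      (φ (x + z) - φ x -
        Set.indicator {w : Euc N | ‖w‖ < 1} (fun w => ⟪w, gradient φ x⟫) z)
        / ‖z‖ ^ ((N : ℝ) + σ)

/-- Viscosity subsolution of `sup_α { f^α + c^α u − I^α[u] } = 0`. -/
def IsSubSol {N : ℕ} {A : Type*} (f c : A → Euc N → ℝ) (η : A → Euc N → Euc N)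
    (ν : A → Measure (Euc N)) (u : Euc N → ℝ) : Prop :=
  (∃ M, SupBd u M) ∧ UpperSemicontinuous u ∧
    ∀ φ : Euc N → ℝ, C2b φ → ∀ x : Euc N, (∀ y, u y - φ y ≤ u x - φ x) →
      ∀ κ : ℝ, 0 < κ → κ < 1 →
        (⨆ α, f α x + c α x * u x - IopSing (η α) (ν α) κ φ x -
          IopTail (η α) (ν α) κ u (gradient φ x) x) ≤ 0

/-- Viscosity supersolution of `sup_α { f^α + c^α u − I^α[u] } = 0`. -/
def IsSuperSol {N : ℕ} {A : Type*} (f c : A → Euc N → ℝ) (η : A → Euc N → Euc N)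
    (ν : A → Measure (Euc N)) (u : Euc N → ℝ) : Prop :=
  (∃ M, SupBd u M) ∧ LowerSemicontinuous u ∧
    ∀ φ : Euc N → ℝ, C2b φ → ∀ x : Euc N, (∀ y, u x - φ x ≤ u y - φ y) →
      ∀ κ : ℝ, 0 < κ → κ < 1 →
        0 ≤ (⨆ α, f α x + c α x * u x - IopSing (η α) (ν α) κ φ x -
          IopTail (η α) (ν α) κ u (gradient φ x) x)

/-- Viscosity solution of `sup_α { f^α + c^α u − I^α[u] } = 0`. -/
def IsSol {N : ℕ} {A : Type*} (f c : A → Euc N → ℝ) (η : A → Euc N → Euc N)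
    (ν : A → Measure (Euc N)) (u : Euc N → ℝ) : Prop :=
  Continuous u ∧ IsSubSol f c η ν u ∧ IsSuperSol f c η ν u

/-- Viscosity subsolution of `λu + sup_α { f^α − I^α[u] } = 0`. -/
def IsSubSolLam {N : ℕ} {A : Type*} (lam : ℝ) (f : A → Euc N → ℝ) (η : A → Euc N → Euc N)
    (ν : A → Measure (Euc N)) (u : Euc N → ℝ) : Prop :=
  (∃ M, SupBd u M) ∧ UpperSemicontinuous u ∧
    ∀ φ : Euc N → ℝ, C2b φ → ∀ x : Euc N, (∀ y, u y - φ y ≤ u x - φ x) →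
      ∀ κ : ℝ, 0 < κ → κ < 1 →
        lam * u x + (⨆ α, f α x - IopSing (η α) (ν α) κ φ x -
          IopTail (η α) (ν α) κ u (gradient φ x) x) ≤ 0

/-- Viscosity supersolution of `λu + sup_α { f^α − I^α[u] } = 0`. -/
def IsSuperSolLam {N : ℕ} {A : Type*} (lam : ℝ) (f : A → Euc N → ℝ) (η : A → Euc N → Euc N)
    (ν : A → Measure (Euc N)) (u : Euc N → ℝ) : Prop :=
  (∃ M, SupBd u M) ∧ LowerSemicontinuous u ∧
    ∀ φ : Euc N → ℝ, C2b φ → ∀ x : Euc N, (∀ y, u x - φ x ≤ u y - φ y) →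
      ∀ κ : ℝ, 0 < κ → κ < 1 →
        0 ≤ lam * u x + (⨆ α, f α x - IopSing (η α) (ν α) κ φ x -
          IopTail (η α) (ν α) κ u (gradient φ x) x)

/-- Viscosity solution of `λu + sup_α { f^α − I^α[u] } = 0`. -/
def IsSolLam {N : ℕ} {A : Type*} (lam : ℝ) (f : A → Euc N → ℝ) (η : A → Euc N → Euc N)
    (ν : A → Measure (Euc N)) (u : Euc N → ℝ) : Prop :=
  Continuous u ∧ IsSubSolLam lam f η ν u ∧ IsSuperSolLam lam f η ν u

/-! ### Discretization -/

/-- Grid point `h·j`. -/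
def gridPt (N : ℕ) (h : ℝ) (j : Fin N → ℤ) : Euc N := WithLp.toLp 2 (fun l => h * (j l : ℝ))

/-- Multilinear interpolation basis function `ω_j(x; h)`. -/
def wt {N : ℕ} (h : ℝ) (j : Fin N → ℤ) (x : Euc N) : ℝ :=
  ∏ l : Fin N, max 0 (1 - |x l / h - (j l : ℝ)|)

/-- Multilinear interpolation operator `i_h`. -/
def interp {N : ℕ} (h : ℝ) (φ : Euc N → ℝ) (x : Euc N) : ℝ :=
  ∑' j : Fin N → ℤ, φ (gridPt N h j) * wt h j x

/-- The diffusion matrix `a_δ = (1/2)∫_{0<|z|<δ} η(z)η(z)^T ν(dz)`. -/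
def aMat {N : ℕ} (η : Euc N → Euc N) (ν : Measure (Euc N)) (δ : ℝ) :
    Matrix (Fin N) (Fin N) ℝ :=
  Matrix.of fun i l => (1 / 2) * ∫ z in {z : Euc N | 0 < ‖z‖ ∧ ‖z‖ < δ}, η z i * η z l ∂ν

/-- The `i`-th column of a matrix, as a vector in `ℝ^N`. -/
def matCol {N : ℕ} (s : Matrix (Fin N) (Fin N) ℝ) (i : Fin N) : Euc N := WithLp.toLp 2 (fun l => s l i)

/-- The interpolated semi-Lagrangian approximation `L_{δ,k,h}` (with square-root matrix `s`). -/
def SLop {N : ℕ} (s : Matrix (Fin N) (Fin N) ℝ) (k h : ℝ) (φ : Euc N → ℝ) (x : Euc N) : ℝ :=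
  ∑ i : Fin N,
    (interp h φ (x + k • matCol s i) + interp h φ (x - k • matCol s i) - 2 * φ x) / (2 * k ^ 2)

/-- `tr(a · D²φ(x))`. -/
def hessTr {N : ℕ} (a : Matrix (Fin N) (Fin N) ℝ) (φ : Euc N → ℝ) (x : Euc N) : ℝ :=
  ∑ i : Fin N, ∑ l : Fin N,
    a i l * iteratedFDeriv ℝ 2 φ x ![EuclideanSpace.single l (1 : ℝ), EuclideanSpace.single i 1]

/-- The quadrature approximation `I^δ_h` of the tail operator. -/
def quadOp {N : ℕ} (η : Euc N → Euc N) (ν : Measure (Euc N)) (δ h : ℝ) (φ : Euc N → ℝ)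
    (x : Euc N) : ℝ :=
  ∑' j : Fin N → ℤ, (φ (x + gridPt N h j) - φ x) * ∫ z in {z : Euc N | δ < ‖z‖}, wt h j (η z) ∂ν

/-- The quadrature operator `J^δ_h` with weights w.r.t. the measure `|z|^{-N-σ} dz`. -/
def Jquad {N : ℕ} (σ : ℝ) (η : Euc N → Euc N) (δ h : ℝ) (φ : Euc N → ℝ) (x : Euc N) : ℝ :=
  ∑' j : Fin N → ℤ, (φ (x + gridPt N h j) - φ x) *
    ∫ z in {z : Euc N | δ < ‖z‖}, wt h j (η z) / ‖z‖ ^ ((N : ℝ) + σ)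

/-- `u` is a bounded continuous solution of the scheme (S). -/
def SolvesScheme {N : ℕ} {A : Type*} (f c : A → Euc N → ℝ) (η : A → Euc N → Euc N)
    (ν : A → Measure (Euc N)) (sq : A → Matrix (Fin N) (Fin N) ℝ) (δ k h : ℝ)
    (u : Euc N → ℝ) : Prop :=
  Continuous u ∧ (∃ M, SupBd u M) ∧
    ∀ x, (⨆ α, f α x + c α x * u x - SLop (sq α) k h u x - quadOp (η α) (ν α) δ h u x) = 0

/-! ### Mollifiers and fractional heat kernel -/

/-- Mollification `v * ρ_ε`. -/
def mollify {N : ℕ} (ρ : Euc N → ℝ) (ε : ℝ) (v : Euc N → ℝ) (x : Euc N) : ℝ :=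
  ∫ y : Euc N, v y * ((1 / ε ^ N) * ρ (ε⁻¹ • (x - y)))

/-- The fractional heat kernel `K̃^σ(t,·)`, the inverse Fourier transform of `e^{-t|ξ|^σ}`. -/
def fracHeatKernel {N : ℕ} (σ t : ℝ) (x : Euc N) : ℝ :=
  ∫ ξ : Euc N, Real.cos (2 * Real.pi * ⟪x, ξ⟫) * Real.exp (-t * ‖ξ‖ ^ σ)

/-- Fractional heat regularization `v^{[ε]} = v * K̃^σ(ε^σ,·)`. -/
def heatMollify {N : ℕ} (σ ε : ℝ) (v : Euc N → ℝ) (x : Euc N) : ℝ :=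
  ∫ y : Euc N, v (x - y) * fracHeatKernel σ (ε ^ σ) y

/-! ### Powers of the discrete Laplacian -/

/-- The discrete Laplacian `Δ_h`. -/
def discLap {N : ℕ} (h : ℝ) (φ : Euc N → ℝ) (x : Euc N) : ℝ :=
  ∑ l : Fin N,
    (φ (x + h • EuclideanSpace.single l (1 : ℝ)) - 2 * φ x +
      φ (x - h • EuclideanSpace.single l (1 : ℝ))) / h ^ 2

/-- The discrete heat semigroup `e^{tΔ_h}φ(x)` (operator exponential, pointwise). -/
def discHeat {N : ℕ} (h t : ℝ) (φ : Euc N → ℝ) (x : Euc N) : ℝ :=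
  ∑' n : ℕ, (t ^ n / n.factorial) * (discLap h)^[n] φ x

/-- The power of the discrete Laplacian `(−Δ_h)^{σ/2}`. -/
def discFracLap {N : ℕ} (σ h : ℝ) (φ : Euc N → ℝ) (x : Euc N) : ℝ :=
  (1 / Real.Gamma (-(σ / 2))) * ∫ t in Set.Ioi (0 : ℝ), (discHeat h t φ x - φ x) / t ^ (1 + σ / 2)

/-- The normalizing constant `c_{N,σ}` of the fractional Laplacian with symbol `|ξ|^σ`. -/
def fracConst (N : ℕ) (σ : ℝ) : ℝ :=
  2 ^ σ * Real.Gamma (((N : ℝ) + σ) / 2) / (Real.pi ^ ((N : ℝ) / 2) * |Real.Gamma (-(σ / 2))|)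

/-- Singular part of the fractional Laplacian acting on a test function (equation (F)). -/
def fracSing {N : ℕ} (σ κ : ℝ) (φ : Euc N → ℝ) (x : Euc N) : ℝ :=
  ∫ z in {z : Euc N | 0 < ‖z‖ ∧ ‖z‖ < κ},
    (φ x - φ (x + z) +
      Set.indicator {w : Euc N | ‖w‖ < 1} (fun w => ⟪w, gradient φ x⟫) z)
      / ‖z‖ ^ ((N : ℝ) + σ)

/-- Tail part of the fractional Laplacian acting on `u` (equation (F)). -/
def fracTail {N : ℕ} (σ κ : ℝ) (u : Euc N → ℝ) (p : Euc N) (x : Euc N) : ℝ :=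
  ∫ z in {z : Euc N | κ ≤ ‖z‖},
    (u x - u (x + z) + Set.indicator {w : Euc N | ‖w‖ < 1} (fun w => ⟪w, p⟫) z)
      / ‖z‖ ^ ((N : ℝ) + σ)

/-- Viscosity subsolution of (F): `λu + sup_α { f^α + a^α (−Δ)^{σ/2} u } = 0`. -/
def IsSubSolF {N : ℕ} {A : Type*} (σ lam : ℝ) (f : A → Euc N → ℝ) (a : A → ℝ)
    (u : Euc N → ℝ) : Prop :=
  (∃ M, SupBd u M) ∧ UpperSemicontinuous u ∧
    ∀ φ : Euc N → ℝ, C2b φ → ∀ x : Euc N, (∀ y, u y - φ y ≤ u x - φ x) →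
      ∀ κ : ℝ, 0 < κ → κ < 1 →
        lam * u x + (⨆ α, f α x + a α * (fracConst N σ *
          (fracSing σ κ φ x + fracTail σ κ u (gradient φ x) x))) ≤ 0

/-- Viscosity supersolution of (F). -/
def IsSuperSolF {N : ℕ} {A : Type*} (σ lam : ℝ) (f : A → Euc N → ℝ) (a : A → ℝ)
    (u : Euc N → ℝ) : Prop :=
  (∃ M, SupBd u M) ∧ LowerSemicontinuous u ∧
    ∀ φ : Euc N → ℝ, C2b φ → ∀ x : Euc N, (∀ y, u x - φ x ≤ u y - φ y) →
      ∀ κ : ℝ, 0 < κ → κ < 1 →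
        0 ≤ lam * u x + (⨆ α, f α x + a α * (fracConst N σ *
          (fracSing σ κ φ x + fracTail σ κ u (gradient φ x) x)))

/-- Viscosity solution of (F). -/
def IsSolF {N : ℕ} {A : Type*} (σ lam : ℝ) (f : A → Euc N → ℝ) (a : A → ℝ)
    (u : Euc N → ℝ) : Prop :=
  Continuous u ∧ IsSubSolF σ lam f a u ∧ IsSuperSolF σ lam f a u

/-- `u` is a bounded continuous solution of the scheme (Fh). -/
def SolvesFh {N : ℕ} {A : Type*} (σ lam h : ℝ) (f : A → Euc N → ℝ) (a : A → ℝ)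
    (u : Euc N → ℝ) : Prop :=
  Continuous u ∧ (∃ M, SupBd u M) ∧
    ∀ x, lam * u x + (⨆ α, f α x + a α * discFracLap σ h u x) = 0

end

noncomputable section

/-- `u` is a bounded continuous solution of the scheme (S_λ): `λu + sup_α{f^α − L[u] − I_h[u]} = 0`. -/
def SolvesSchemeLam {N : ℕ} {A : Type*} (lam : ℝ) (f : A → Euc N → ℝ) (η : A → Euc N → Euc N)
    (ν : A → Measure (Euc N)) (sq : A → Matrix (Fin N) (Fin N) ℝ) (δ k h : ℝ)
    (u : Euc N → ℝ) : Prop :=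
  Continuous u ∧ (∃ M, SupBd u M) ∧
    ∀ x, lam * u x + (⨆ α, f α x - SLop (sq α) k h u x - quadOp (η α) (ν α) δ h u x) = 0

end

/-!
With `ψ v = φ (x + v) - φ x`, the truncated operator is `∫_{|z|>δ} ψ (η z) dν` and the
quadrature is the same integral of the multilinear interpolant `interp h ψ`. At each point `y`
the weights `wt h j y` vanish off the `2^N` vertices of the grid cell containing `y`, sum to one
and have vanishing first moments, so interpolation reproduces affine functions and Taylor's
formula bounds `|interp h ψ y - ψ y|` by `N h² ‖D²φ‖₀`. It remains to bound `ν {|z| > δ}`: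
(A4) bounds the mass outside the open unit ball by `K`, and inside it (A6) together with the
scaling `z = δ w` gives `C δ^{-σ} ∫_{|w|>1} |w|^{-N-σ} dw`, which is finite because `σ > 0`.
-/

noncomputable def hat (t : ℝ) : ℝ := max 0 (1 - |t|)

lemma hat_nonneg (t : ℝ) : 0 ≤ hat t := le_max_left _ _

lemma hat_le_one (t : ℝ) : hat t ≤ 1 := max_le zero_le_one (by linarith [abs_nonneg t])

lemma abs_lt_one_of_hat_ne_zero {t : ℝ} (ht : hat t ≠ 0) : |t| < 1 := by
  by_contra! h1
  exact ht (max_eq_left (by linarith))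

lemma hat_sub_floor (s : ℝ) : hat (s - ⌊s⌋) = 1 - Int.fract s := by
  rw [hat, Int.self_sub_floor, abs_of_nonneg (Int.fract_nonneg s),
    max_eq_right (by linarith [Int.fract_lt_one s])]

lemma hat_sub_floor_sub_one (s : ℝ) : hat (s - (⌊s⌋ + 1 : ℤ)) = Int.fract s := by
  have hs : s - ((⌊s⌋ + 1 : ℤ) : ℝ) = Int.fract s - 1 := by
    push_cast; linarith [Int.self_sub_floor s]
  rw [hat, hs, abs_of_nonpos (by linarith [Int.fract_lt_one s]),
    max_eq_right (by linarith [Int.fract_nonneg s])]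
  ring

lemma eq_floor_or_eq_floor_add_one_of_hat_ne_zero {s : ℝ} {k : ℤ} (hk : hat (s - k) ≠ 0) :
    k = ⌊s⌋ ∨ k = ⌊s⌋ + 1 := by
  obtain ⟨hlo, hhi⟩ := abs_lt.mp (abs_lt_one_of_hat_ne_zero hk)
  have h1 : ⌊s⌋ ≤ k := Int.floor_le_iff.mpr (by linarith)
  have h2 : k < ⌊s⌋ + 2 := by
    have := Int.lt_floor_add_one s
    exact_mod_cast (show (k : ℝ) < ⌊s⌋ + 2 by linarith)
  omega

section GridCell

variable {N : ℕ} {h : ℝ} {y : Euc N}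

lemma wt_eq_prod_hat (j : Fin N → ℤ) : wt h j y = ∏ l, hat (y l / h - j l) := rfl

lemma wt_nonneg (j : Fin N → ℤ) : 0 ≤ wt h j y :=
  Finset.prod_nonneg fun _ _ => hat_nonneg _

lemma continuous_wt (j : Fin N → ℤ) : Continuous (wt (N := N) h j) := by
  unfold wt; fun_prop

noncomputable def gridCell (h : ℝ) (y : Euc N) : Finset (Fin N → ℤ) :=
  Fintype.piFinset fun l => {⌊y l / h⌋, ⌊y l / h⌋ + 1}

lemma mem_gridCell_of_wt_ne_zero {j : Fin N → ℤ} (hj : wt h j y ≠ 0) : j ∈ gridCell h y := by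
  refine Fintype.mem_piFinset.mpr fun l => ?_
  have hl : hat (y l / h - j l) ≠ 0 := fun h0 => hj (Finset.prod_eq_zero (Finset.mem_univ l) h0)
  simpa using eq_floor_or_eq_floor_add_one_of_hat_ne_zero hl

lemma sum_gridCell_prod (f : Fin N → ℤ → ℝ) :
    ∑ j ∈ gridCell h y, ∏ l, f l (j l) = ∏ l, (f l ⌊y l / h⌋ + f l (⌊y l / h⌋ + 1)) := by
  rw [gridCell, ← Finset.prod_univ_sum]
  exact Finset.prod_congr rfl fun l _ => Finset.sum_pair (by omega)

lemma tsum_mul_wt (c : (Fin N → ℤ) → ℝ) :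
    ∑' j, c j * wt h j y = ∑ j ∈ gridCell h y, c j * wt h j y :=
  tsum_eq_sum fun j hj => by
    rw [mul_eq_zero]; exact .inr (by_contra fun h0 => hj (mem_gridCell_of_wt_ne_zero h0))

lemma sum_gridCell_wt : ∑ j ∈ gridCell h y, wt h j y = 1 := by
  refine (sum_gridCell_prod fun l k => hat (y l / h - k)).trans (Finset.prod_eq_one fun l _ => ?_)
  rw [hat_sub_floor, hat_sub_floor_sub_one]
  ring

lemma tsum_wt : ∑' j, wt h j y = 1 := by
  simpa [sum_gridCell_wt] using tsum_mul_wt (h := h) (y := y) fun _ => 1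

lemma summable_wt : Summable fun j => wt h j y :=
  summable_of_ne_finset_zero (s := gridCell h y) fun _ hj =>
    by_contra fun h0 => hj (mem_gridCell_of_wt_ne_zero h0)

lemma sum_gridCell_wt_mul_sub (hh : h ≠ 0) (l₀ : Fin N) :
    ∑ j ∈ gridCell h y, wt h j y * (gridPt N h j l₀ - y l₀) = 0 := by
  have hprod : ∀ j : Fin N → ℤ, wt h j y * (gridPt N h j l₀ - y l₀) =
      h * ∏ l, hat (y l / h - j l) * (if l = l₀ then (j l - y l / h) else 1) := by
    intro j
    rw [Finset.prod_mul_distrib, Fintype.prod_ite_eq', wt_eq_prod_hat]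
    simp only [gridPt]
    field_simp
  rw [Finset.sum_congr rfl fun j _ => hprod j, ← Finset.mul_sum,
    sum_gridCell_prod (fun l k => hat (y l / h - k) * (if l = l₀ then (k - y l / h) else 1))]
  refine mul_eq_zero_of_right _ (Finset.prod_eq_zero (Finset.mem_univ l₀) ?_)
  simp only [if_true, hat_sub_floor, hat_sub_floor_sub_one]
  push_cast
  linear_combination -Int.self_sub_floor (y l₀ / h)

lemma norm_gridPt_sub_sq_le (hh : 0 < h) {j : Fin N → ℤ} (hj : wt h j y ≠ 0) :
    ‖gridPt N h j - y‖ ^ 2 ≤ N * h ^ 2 := by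
  rw [EuclideanSpace.norm_sq_eq]
  calc ∑ l, ‖(gridPt N h j - y) l‖ ^ 2 ≤ ∑ _ : Fin N, h ^ 2 := by
        refine Finset.sum_le_sum fun l _ => ?_
        have hl : hat (y l / h - j l) ≠ 0 :=
          fun h0 => hj (Finset.prod_eq_zero (Finset.mem_univ l) h0)
        have h1 := abs_lt_one_of_hat_ne_zero hl
        have heq : (gridPt N h j - y) l = -h * (y l / h - j l) := by
          simp only [gridPt, PiLp.sub_apply]
          field_simp
          ring
        have hsq : (y l / h - j l) ^ 2 ≤ 1 := by
          rw [← sq_abs]; nlinarith [abs_nonneg (y l / h - j l)]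
        rw [heq, Real.norm_eq_abs, sq_abs, mul_pow, neg_sq]
        exact mul_le_of_le_one_right (sq_nonneg h) hsq
    _ = N * h ^ 2 := by simp

end GridCell

lemma abs_interp_sub_le {N : ℕ} {h : ℝ} (hh : 0 < h) {ψ : Euc N → ℝ} {y : Euc N}
    (D : Euc N →L[ℝ] ℝ) {M : ℝ} (hM : 0 ≤ M)
    (htaylor : ∀ p, |ψ p - ψ y - D (p - y)| ≤ M * ‖p - y‖ ^ 2) :
    |interp h ψ y - ψ y| ≤ N * M * h ^ 2 := by
  have hmoment : ∑ j ∈ gridCell h y, wt h j y * D (gridPt N h j - y) = 0 := by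
    simp_rw [← smul_eq_mul, ← map_smul, ← map_sum]
    convert D.map_zero
    ext l
    simpa [WithLp.ofLp_sum, mul_comm] using sum_gridCell_wt_mul_sub (y := y) hh.ne' l
  have hsplit : interp h ψ y - ψ y =
      ∑ j ∈ gridCell h y, wt h j y * (ψ (gridPt N h j) - ψ y - D (gridPt N h j - y)) := by
    simp only [interp, tsum_mul_wt, mul_sub, Finset.sum_sub_distrib, hmoment,
      ← Finset.sum_mul, sum_gridCell_wt]
    simp [mul_comm]
  have hterm : ∀ j, |wt h j y * (ψ (gridPt N h j) - ψ y - D (gridPt N h j - y))|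
      ≤ wt h j y * (N * M * h ^ 2) := by
    intro j
    rw [abs_mul, abs_of_nonneg (wt_nonneg j)]
    rcases eq_or_ne (wt h j y) 0 with h0 | h0
    · simp [h0]
    · refine mul_le_mul_of_nonneg_left ((htaylor _).trans ?_) (wt_nonneg j)
      exact (mul_le_mul_of_nonneg_left (norm_gridPt_sub_sq_le hh h0) hM).trans_eq (by ring)
  calc |interp h ψ y - ψ y|
      ≤ ∑ j ∈ gridCell h y, wt h j y * (N * M * h ^ 2) := by
        rw [hsplit]
        exact (Finset.abs_sum_le_sum_abs _ _).trans (Finset.sum_le_sum fun j _ => hterm j)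
    _ = N * M * h ^ 2 := by rw [← Finset.sum_mul, sum_gridCell_wt, one_mul]

lemma abs_sub_sub_fderiv_le {E : Type*} [NormedAddCommGroup E] [NormedSpace ℝ E]
    {f : E → ℝ} (hf : ContDiff ℝ 2 f) {M : ℝ} (hM : ∀ v, ‖iteratedFDeriv ℝ 2 f v‖ ≤ M)
    (y p : E) : |f p - f y - fderiv ℝ f y (p - y)| ≤ M * ‖p - y‖ ^ 2 := by
  have hf' : ContDiff ℝ 1 (fderiv ℝ f) := hf.fderiv_right le_rfl
  have hlip : ∀ q, ‖fderiv ℝ f q - fderiv ℝ f y‖ ≤ M * ‖q - y‖ := fun q =>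
    Convex.norm_image_sub_le_of_norm_fderiv_le (fun v _ => hf'.differentiable one_ne_zero v)
      (fun v _ => by rw [← norm_iteratedFDeriv_one, norm_iteratedFDeriv_fderiv]; exact hM v)
      convex_univ (mem_univ y) (mem_univ q)
  have hM0 : 0 ≤ M := (norm_nonneg _).trans (hM y)
  have := Convex.norm_image_sub_le_of_norm_fderiv_le' (φ := fderiv ℝ f y)
    (fun v _ => hf.differentiable two_ne_zero v)
    (fun q hq => (hlip q).trans (mul_le_mul_of_nonneg_left (mem_closedBall_iff_norm.mp hq) hM0))
    (convex_closedBall y ‖p - y‖) (Metric.mem_closedBall_self (norm_nonneg _))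
    (mem_closedBall_iff_norm.mpr le_rfl)
  rw [Real.norm_eq_abs] at this
  linarith

section Quadrature

variable {α : Type*} [MeasurableSpace α] {μ : Measure α} [IsFiniteMeasure μ] {N : ℕ} {h : ℝ}
  {e : α → Euc N}

lemma integrable_wt_comp (he : Measurable e) (j : Fin N → ℤ) :
    Integrable (fun z => wt h j (e z)) μ :=
  (integrable_const 1).mono' ((continuous_wt j).measurable.comp he).aestronglyMeasurable
    (ae_of_all _ fun z => by
      rw [Real.norm_of_nonneg (wt_nonneg j)]
      exact Finset.prod_le_one (fun _ _ => hat_nonneg _) fun _ _ => hat_le_one _)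

lemma summable_integral_wt (he : Measurable e) : Summable fun j => ∫ z, wt h j (e z) ∂μ := by
  refine summable_of_sum_le (c := μ.real univ) (fun j => integral_nonneg fun z => wt_nonneg j)
    fun s => ?_
  rw [← integral_finsetSum s fun j _ => integrable_wt_comp he j]
  refine (integral_mono (integrable_finsetSum s fun j _ => integrable_wt_comp he j)
    (integrable_const 1) fun z => ?_).trans_eq (by simp)
  rw [← tsum_wt (h := h) (y := e z)]
  exact summable_wt.sum_le_tsum s fun j _ => wt_nonneg j

lemma hasSum_mul_integral_wt (he : Measurable e) {ψ : Euc N → ℝ} {B : ℝ}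
    (hψ : ∀ y, |ψ y| ≤ B) :
    HasSum (fun j => ψ (gridPt N h j) * ∫ z, wt h j (e z) ∂μ) (∫ z, interp h ψ (e z) ∂μ) := by
  simp_rw [← integral_const_mul]
  refine hasSum_integral_of_summable_integral_norm (fun j => (integrable_wt_comp he j).const_mul _)
    (((summable_integral_wt (μ := μ) (h := h) he).mul_left B).of_nonneg_of_le
      (fun j => integral_nonneg fun z => norm_nonneg _) fun j => ?_)
  rw [← integral_const_mul]
  refine integral_mono ((integrable_wt_comp he j).const_mul _).norm
    ((integrable_wt_comp he j).const_mul _) fun z => ?_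
  rw [norm_mul, Real.norm_of_nonneg (wt_nonneg j), Real.norm_eq_abs]
  exact mul_le_mul_of_nonneg_right (hψ _) (wt_nonneg j)

lemma abs_integral_sub_tsum_mul_integral_wt_le (he : Measurable e) {ψ : Euc N → ℝ}
    (hψm : Measurable ψ) {B : ℝ} (hψ : ∀ y, |ψ y| ≤ B) {ε : ℝ}
    (hinterp : ∀ y, |interp h ψ y - ψ y| ≤ ε) :
    |∫ z, ψ (e z) ∂μ - ∑' j, ψ (gridPt N h j) * ∫ z, wt h j (e z) ∂μ| ≤ ε * μ.real univ := by
  have hψe : Integrable (fun z => ψ (e z)) μ :=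
    (integrable_const B).mono' (hψm.comp he).aestronglyMeasurable
      (ae_of_all _ fun z => (Real.norm_eq_abs _).trans_le (hψ _))
  have hinterp_e : Integrable (fun z => interp h ψ (e z)) μ :=
    (integrable_const (B + ε)).mono'
      ((Measurable.tsum fun j => measurable_const.mul
        ((continuous_wt j).measurable)).comp he).aestronglyMeasurable
      (ae_of_all _ fun z => by
        rw [Real.norm_eq_abs]
        linarith [abs_sub_abs_le_abs_sub (interp h ψ (e z)) (ψ (e z)), hinterp (e z), hψ (e z)])
  rw [(hasSum_mul_integral_wt he hψ).tsum_eq, ← integral_sub hψe hinterp_e, ← Real.norm_eq_abs]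
  exact norm_integral_le_of_norm_le_const (ae_of_all _ fun z => by
    rw [Real.norm_eq_abs, abs_sub_comm]; exact hinterp (e z))

end Quadrature

section TailMass

variable {E : Type*} [NormedAddCommGroup E] [NormedSpace ℝ E] [FiniteDimensional ℝ E]
  [MeasurableSpace E] [BorelSpace E] (μ : Measure E) [μ.IsAddHaarMeasure]

lemma setLIntegral_norm_gt_rpow_neg (r : ℝ) {δ : ℝ} (hδ : 0 < δ) :
    ∫⁻ z in {z : E | δ < ‖z‖}, ENNReal.ofReal (‖z‖ ^ (-r)) ∂μ =
      ENNReal.ofReal (δ ^ ((Module.finrank ℝ E : ℝ) - r)) *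
        ∫⁻ z in {z : E | 1 < ‖z‖}, ENNReal.ofReal (‖z‖ ^ (-r)) ∂μ := by
  have hmeas : ∀ t : ℝ, MeasurableSet {z : E | t < ‖z‖} := fun t =>
    measurableSet_lt measurable_const measurable_norm
  set f : E → ℝ≥0∞ := {z : E | 1 < ‖z‖}.indicator fun z => ENNReal.ofReal (‖z‖ ^ (-r))
  have hf : Measurable f := (Measurable.ennreal_ofReal (by fun_prop)).indicator (hmeas 1)
  have hscale : ∀ z : E, f (δ⁻¹ • z) = ENNReal.ofReal (δ ^ r) *
      {z : E | δ < ‖z‖}.indicator (fun z => ENNReal.ofReal (‖z‖ ^ (-r))) z := by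
    intro z
    have hnorm : ‖δ⁻¹ • z‖ = δ⁻¹ * ‖z‖ := by rw [norm_smul, Real.norm_of_nonneg (by positivity)]
    have hiff : 1 < ‖δ⁻¹ • z‖ ↔ δ < ‖z‖ := by rw [hnorm, ← div_eq_inv_mul, one_lt_div hδ]
    by_cases hz : δ < ‖z‖
    · simp only [f, indicator_of_mem (show δ⁻¹ • z ∈ {z : E | 1 < ‖z‖} from hiff.mpr hz),
        indicator_of_mem (show z ∈ {z : E | δ < ‖z‖} from hz), hnorm]
      rw [← ENNReal.ofReal_mul (by positivity), Real.mul_rpow (by positivity) (norm_nonneg z),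
        Real.inv_rpow hδ.le, Real.rpow_neg hδ.le, inv_inv]
    · simp only [f, indicator_of_notMem (show δ⁻¹ • z ∉ {z : E | 1 < ‖z‖} from mt hiff.mp hz),
        indicator_of_notMem (show z ∉ {z : E | δ < ‖z‖} from hz), mul_zero]
  have key : ENNReal.ofReal (δ ^ (Module.finrank ℝ E : ℝ)) * ∫⁻ z, f z ∂μ =
      ENNReal.ofReal (δ ^ r) * ∫⁻ z in {z : E | δ < ‖z‖}, ENNReal.ofReal (‖z‖ ^ (-r)) ∂μ :=
    calc ENNReal.ofReal (δ ^ (Module.finrank ℝ E : ℝ)) * ∫⁻ z, f z ∂μ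
        = ∫⁻ z, f z ∂(μ.map (δ⁻¹ • ·)) := by
          rw [Measure.map_addHaar_smul μ (by positivity), lintegral_smul_measure, smul_eq_mul,
            inv_pow, inv_inv, abs_of_pos (by positivity), Real.rpow_natCast]
      _ = ∫⁻ z, f (δ⁻¹ • z) ∂μ := lintegral_map hf (measurable_const_smul δ⁻¹)
      _ = ENNReal.ofReal (δ ^ r) * ∫⁻ z in {z : E | δ < ‖z‖}, ENNReal.ofReal (‖z‖ ^ (-r)) ∂μ := by
          rw [lintegral_congr hscale, lintegral_const_mul' _ _ ENNReal.ofReal_ne_top,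
            lintegral_indicator (hmeas δ)]
  rw [lintegral_indicator (hmeas 1)] at key
  have hcancel : ENNReal.ofReal (δ ^ (-r)) * ENNReal.ofReal (δ ^ r) = 1 := by
    rw [← ENNReal.ofReal_mul (by positivity), ← Real.rpow_add hδ, neg_add_cancel,
      Real.rpow_zero, ENNReal.ofReal_one]
  rw [← one_mul (∫⁻ z in _, _ ∂μ), ← hcancel, mul_assoc, ← key, ← mul_assoc,
    ← ENNReal.ofReal_mul (by positivity), ← Real.rpow_add hδ, sub_eq_neg_add]

lemma setLIntegral_norm_gt_one_rpow_neg_lt_top {r : ℝ} (hr : (Module.finrank ℝ E : ℝ) < r) :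
    ∫⁻ z in {z : E | 1 < ‖z‖}, ENNReal.ofReal (‖z‖ ^ (-r)) ∂μ < ∞ := by
  have hr0 : 0 < r := (Nat.cast_nonneg _).trans_lt hr
  have hpt : ∀ z ∈ {z : E | 1 < ‖z‖},
      ENNReal.ofReal (‖z‖ ^ (-r)) ≤ ENNReal.ofReal (2 ^ r) * ENNReal.ofReal ((1 + ‖z‖) ^ (-r)) := by
    intro z (hz : 1 < ‖z‖)
    rw [← ENNReal.ofReal_mul (by positivity)]
    refine ENNReal.ofReal_le_ofReal ((Real.rpow_le_rpow_of_nonpos (by positivity)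
      (show (1 + ‖z‖) / 2 ≤ ‖z‖ by linarith) (by linarith)).trans_eq ?_)
    rw [Real.div_rpow (by positivity) zero_le_two, Real.rpow_neg zero_le_two, div_inv_eq_mul,
      mul_comm]
  calc ∫⁻ z in {z : E | 1 < ‖z‖}, ENNReal.ofReal (‖z‖ ^ (-r)) ∂μ
      ≤ ∫⁻ z in {z : E | 1 < ‖z‖}, ENNReal.ofReal (2 ^ r) * ENNReal.ofReal ((1 + ‖z‖) ^ (-r)) ∂μ :=
        setLIntegral_mono' (measurableSet_lt measurable_const measurable_norm) hpt
    _ ≤ ∫⁻ z, ENNReal.ofReal (2 ^ r) * ENNReal.ofReal ((1 + ‖z‖) ^ (-r)) ∂μ :=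
        setLIntegral_le_lintegral _ _
    _ < ∞ := by
        rw [lintegral_const_mul' _ _ ENNReal.ofReal_ne_top]
        exact ENNReal.mul_lt_top ENNReal.ofReal_lt_top (finite_integral_one_add_norm hr)

end TailMass

lemma measure_one_le_norm_le {E : Type*} [NormedAddCommGroup E] [MeasurableSpace E]
    [BorelSpace E] {ν : Measure E} {K : ℝ}
    (hν : (∫⁻ z in {z : E | ‖z‖ ≤ 1}, ENNReal.ofReal (‖z‖ ^ 2) ∂ν) + ν {z : E | 1 < ‖z‖} ≤
      ENNReal.ofReal K) :
    ν {z : E | 1 ≤ ‖z‖} ≤ ENNReal.ofReal K := by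
  have hsphere : ν {z : E | ‖z‖ = 1} ≤ ∫⁻ z in {z : E | ‖z‖ ≤ 1}, ENNReal.ofReal (‖z‖ ^ 2) ∂ν :=
    calc ν {z : E | ‖z‖ = 1}
        = ∫⁻ z in {z : E | ‖z‖ = 1}, ENNReal.ofReal (‖z‖ ^ 2) ∂ν := by
          rw [setLIntegral_congr_fun (measurableSet_eq_fun measurable_norm measurable_const)
            (g := fun _ => 1) fun z (hz : ‖z‖ = 1) => by simp [hz], setLIntegral_one]
      _ ≤ _ := lintegral_mono_set fun z (hz : ‖z‖ = 1) => hz.le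
  have hsplit : {z : E | 1 ≤ ‖z‖} = {z : E | ‖z‖ = 1} ∪ {z : E | 1 < ‖z‖} := by
    ext z; simp [le_iff_eq_or_lt, eq_comm]
  rw [hsplit]
  exact (measure_union_le _ _).trans ((add_le_add hsphere le_rfl).trans hν)

lemma measure_norm_gt_inter_le_of_density {N : ℕ} {σ C : ℝ} (hC : 0 ≤ C)
    {ν : Measure (Euc N)} {g : Euc N → ℝ}
    (hg : ∀ z : Euc N, 0 < ‖z‖ → ‖z‖ < 1 → g z ≤ C / ‖z‖ ^ ((N : ℝ) + σ))
    (hd : ν.restrict {z : Euc N | 0 < ‖z‖ ∧ ‖z‖ < 1} =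
      (volume.restrict {z : Euc N | 0 < ‖z‖ ∧ ‖z‖ < 1}).withDensity fun z => ENNReal.ofReal (g z))
    {δ : ℝ} (hδ : 0 < δ) :
    ν ({z : Euc N | δ < ‖z‖} ∩ {z | 0 < ‖z‖ ∧ ‖z‖ < 1}) ≤
      ENNReal.ofReal C * ENNReal.ofReal (δ ^ (-σ)) *
        ∫⁻ z : Euc N in {z | 1 < ‖z‖}, ENNReal.ofReal (‖z‖ ^ (-((N : ℝ) + σ))) := by
  set A := {z : Euc N | 0 < ‖z‖ ∧ ‖z‖ < 1}
  set S := {z : Euc N | δ < ‖z‖}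
  have hS : MeasurableSet S := measurableSet_lt measurable_const measurable_norm
  have hA : MeasurableSet A :=
    (measurableSet_lt measurable_const measurable_norm).inter
      (measurableSet_lt measurable_norm measurable_const)
  calc ν (S ∩ A) = ∫⁻ z in S ∩ A, ENNReal.ofReal (g z) := by
        rw [← Measure.restrict_apply hS, hd, withDensity_apply _ hS, Measure.restrict_restrict hS]
    _ ≤ ∫⁻ z in S ∩ A, ENNReal.ofReal C * ENNReal.ofReal (‖z‖ ^ (-((N : ℝ) + σ))) :=
        setLIntegral_mono' (hS.inter hA) fun z hz => by
          rw [← ENNReal.ofReal_mul hC, Real.rpow_neg (norm_nonneg z), ← div_eq_mul_inv]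
          exact ENNReal.ofReal_le_ofReal (hg z hz.2.1 hz.2.2)
    _ ≤ ∫⁻ z in S, ENNReal.ofReal C * ENNReal.ofReal (‖z‖ ^ (-((N : ℝ) + σ))) :=
        lintegral_mono_set inter_subset_left
    _ = _ := by
        rw [lintegral_const_mul' _ _ ENNReal.ofReal_ne_top, setLIntegral_norm_gt_rpow_neg _ _ hδ,
          finrank_euclideanSpace_fin, mul_assoc, show (N : ℝ) - (N + σ) = -σ by ring]

lemma measure_norm_gt_le {N : ℕ} {σ C K : ℝ} (hσ : 0 < σ) (hC : 0 ≤ C) (hK : 0 ≤ K)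
    {ν : Measure (Euc N)}
    (hν : (∫⁻ z in {z : Euc N | ‖z‖ ≤ 1}, ENNReal.ofReal (‖z‖ ^ 2) ∂ν) +
      ν {z : Euc N | 1 < ‖z‖} ≤ ENNReal.ofReal K)
    {g : Euc N → ℝ} (hg : ∀ z : Euc N, 0 < ‖z‖ → ‖z‖ < 1 → g z ≤ C / ‖z‖ ^ ((N : ℝ) + σ))
    (hd : ν.restrict {z : Euc N | 0 < ‖z‖ ∧ ‖z‖ < 1} =
      (volume.restrict {z : Euc N | 0 < ‖z‖ ∧ ‖z‖ < 1}).withDensity fun z => ENNReal.ofReal (g z))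
    {δ : ℝ} (hδ : 0 < δ) (hδ1 : δ ≤ 1) :
    ν {z : Euc N | δ < ‖z‖} ≤ ENNReal.ofReal ((K + C *
      (∫⁻ z : Euc N in {z | 1 < ‖z‖}, ENNReal.ofReal (‖z‖ ^ (-((N : ℝ) + σ)))).toReal) *
        δ ^ (-σ)) := by
  set L := ∫⁻ z : Euc N in {z | 1 < ‖z‖}, ENNReal.ofReal (‖z‖ ^ (-((N : ℝ) + σ)))
  have hL : L ≠ ∞ := (setLIntegral_norm_gt_one_rpow_neg_lt_top volume (by simpa using hσ)).ne
  have hCL : 0 ≤ C * L.toReal := mul_nonneg hC ENNReal.toReal_nonneg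
  have hδσ : 1 ≤ δ ^ (-σ) := Real.one_le_rpow_of_pos_of_le_one_of_nonpos hδ hδ1 (by linarith)
  have hcover : {z : Euc N | δ < ‖z‖} ⊆
      ({z | δ < ‖z‖} ∩ {z | 0 < ‖z‖ ∧ ‖z‖ < 1}) ∪ {z | 1 ≤ ‖z‖} := fun z (hz : δ < ‖z‖) => by
    by_cases h1 : 1 ≤ ‖z‖
    · exact .inr h1
    · exact .inl ⟨hz, hδ.trans hz, not_le.mp h1⟩
  calc ν {z : Euc N | δ < ‖z‖}
      ≤ ν ({z | δ < ‖z‖} ∩ {z | 0 < ‖z‖ ∧ ‖z‖ < 1}) + ν {z : Euc N | 1 ≤ ‖z‖} :=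
        (measure_mono hcover).trans (measure_union_le _ _)
    _ ≤ ENNReal.ofReal C * ENNReal.ofReal (δ ^ (-σ)) * L + ENNReal.ofReal K :=
        add_le_add (measure_norm_gt_inter_le_of_density hC hg hd hδ) (measure_one_le_norm_le hν)
    _ = ENNReal.ofReal (C * L.toReal * δ ^ (-σ) + K) := by
        rw [ENNReal.ofReal_add (by positivity) hK, ENNReal.ofReal_mul (by positivity),
          ENNReal.ofReal_mul hC, ENNReal.ofReal_toReal hL, mul_right_comm]
    _ ≤ _ := ENNReal.ofReal_le_ofReal (by nlinarith)

theorem quadrature_truncation_error_general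
    (N : ℕ) (hN : 1 ≤ N) (σ K C : ℝ) (hσ : 0 < σ) (hK : 0 < K) (hC : 0 < C)
    {A : Type*}
    (η : A → Euc N → Euc N) (ν : A → MeasureTheory.Measure (Euc N))
    (hηm : ∀ α, Measurable (η α))
    (hA4 : ∀ α : A, ν α {0} = 0 ∧
      (∫⁻ z in {z : Euc N | ‖z‖ ≤ 1}, ENNReal.ofReal (‖z‖ ^ 2) ∂ν α) +
        ν α {z : Euc N | 1 < ‖z‖} ≤ ENNReal.ofReal K)
    (hA6 : ∀ α : A, ∃ g : Euc N → ℝ,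
      (∀ z : Euc N, 0 < ‖z‖ → ‖z‖ < 1 → 0 ≤ g z ∧ g z ≤ C / ‖z‖ ^ ((N : ℝ) + σ)) ∧
      (ν α).restrict {z : Euc N | 0 < ‖z‖ ∧ ‖z‖ < 1} =
        (MeasureTheory.volume.restrict {z : Euc N | 0 < ‖z‖ ∧ ‖z‖ < 1}).withDensity
          fun z => ENNReal.ofReal (g z)) :
    ∃ K' : ℝ, 0 < K' ∧ ∀ (α : A) (δ h : ℝ), 0 < δ → δ < 1 → 0 < h →
      ∀ φ : Euc N → ℝ, C2b φ → ∀ M2 : ℝ, (∀ y, ‖iteratedFDeriv ℝ 2 φ y‖ ≤ M2) →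
      ∀ x, |Itrunc (η α) (ν α) δ φ x - quadOp (η α) (ν α) δ h φ x| ≤
        K' * (h ^ 2 / δ ^ σ) * M2 := by
  set L := ∫⁻ z : Euc N in {z | 1 < ‖z‖}, ENNReal.ofReal (‖z‖ ^ (-((N : ℝ) + σ)))
  have hN' : (0 : ℝ) < N := by exact_mod_cast hN
  refine ⟨N * (K + C * L.toReal), by positivity, ?_⟩
  intro α δ h hδ hδ1 hh φ ⟨hφ, M, hM⟩ M2 hM2 x
  obtain ⟨g, hg, hd⟩ := hA6 α
  have htail := measure_norm_gt_le hσ hC.le hK.le (hA4 α).2 (fun z h0 h1 => (hg z h0 h1).2) hd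
    hδ hδ1.le
  have : IsFiniteMeasure ((ν α).restrict {z | δ < ‖z‖}) :=
    ⟨by rw [Measure.restrict_apply_univ]; exact htail.trans_lt ENNReal.ofReal_lt_top⟩
  have hM2' : 0 ≤ M2 := (norm_nonneg _).trans (hM2 0)
  set ψ : Euc N → ℝ := fun v => φ (x + v) - φ x
  have hψ : ∀ v, |ψ v| ≤ 2 * M := fun v => by
    have hφM : ∀ w, |φ w| ≤ M := fun w => by simpa using hM 0 (by norm_num) w
    linarith [abs_sub (φ (x + v)) (φ x), hφM (x + v), hφM x]
  have hinterp : ∀ y, |interp h ψ y - ψ y| ≤ N * M2 * h ^ 2 := fun y =>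
    abs_interp_sub_le hh (fderiv ℝ φ (x + y)) hM2' fun p => by
      simpa [ψ, add_sub_add_left_eq_sub] using abs_sub_sub_fderiv_le hφ hM2 (x + y) (x + p)
  calc |Itrunc (η α) (ν α) δ φ x - quadOp (η α) (ν α) δ h φ x|
      ≤ N * M2 * h ^ 2 * ((ν α).restrict {z | δ < ‖z‖}).real univ :=
        abs_integral_sub_tsum_mul_integral_wt_le (hηm α)
          ((hφ.continuous.measurable.comp (measurable_const_add x)).sub_const _) hψ hinterp
    _ ≤ N * M2 * h ^ 2 * ((K + C * L.toReal) * δ ^ (-σ)) := by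
        rw [measureReal_restrict_apply_univ]
        gcongr
        exact ENNReal.toReal_le_of_le_ofReal (by positivity) htail
    _ = N * (K + C * L.toReal) * (h ^ 2 / δ ^ σ) * M2 := by
        rw [Real.rpow_neg hδ.le]; ring

/-- Quadrature truncation error for the bounded nonlocal part. -/
theorem quadrature_truncation_error
    (N : ℕ) (hN : 1 ≤ N) (σ K C : ℝ) (hσ : 0 < σ) (hσ2 : σ < 2) (hK : 0 < K) (hC : 0 < C)
    {A : Type*} [MetricSpace A] [CompactSpace A] [TopologicalSpace.SeparableSpace A] [Nonempty A]
    (η : A → Euc N → Euc N) (ν : A → MeasureTheory.Measure (Euc N))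
    (hηm : ∀ α, Measurable (η α))
    (hA3 : ∀ (α : A) (z : Euc N), ‖z‖ < 1 → ‖η α z‖ ≤ K * ‖z‖)
    (hA4 : ∀ α : A, ν α {0} = 0 ∧
      (∫⁻ z in {z : Euc N | ‖z‖ ≤ 1}, ENNReal.ofReal (‖z‖ ^ 2) ∂ν α) +
        ν α {z : Euc N | 1 < ‖z‖} ≤ ENNReal.ofReal K)
    (hA6 : ∀ α : A, ∃ g : Euc N → ℝ,
      (∀ z : Euc N, 0 < ‖z‖ → ‖z‖ < 1 → 0 ≤ g z ∧ g z ≤ C / ‖z‖ ^ ((N : ℝ) + σ)) ∧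
      (ν α).restrict {z : Euc N | 0 < ‖z‖ ∧ ‖z‖ < 1} =
        (MeasureTheory.volume.restrict {z : Euc N | 0 < ‖z‖ ∧ ‖z‖ < 1}).withDensity
          fun z => ENNReal.ofReal (g z)) :
    ∃ K' : ℝ, 0 < K' ∧ ∀ (α : A) (δ h : ℝ), 0 < δ → δ < 1 → 0 < h →
      ∀ φ : Euc N → ℝ, C2b φ → ∀ M2 : ℝ, (∀ y, ‖iteratedFDeriv ℝ 2 φ y‖ ≤ M2) →
      ∀ x, |Itrunc (η α) (ν α) δ φ x - quadOp (η α) (ν α) δ h φ x| ≤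
        K' * (h ^ 2 / δ ^ σ) * M2 :=
  quadrature_truncation_error_general N hN σ K C hσ hK hC η ν hηm hA4 hA6
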